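/- Under the stated recurrence hypotheses, for all pairwise distinct x, y, z in ℝ \ {−A₁,…,−A_n}: {W_N(y), α_N(z,x)} − {W_N(x), α_N(z,y)} = ((V(x) − V(y))/(x−y))·(∂α_N(z,y)/∂q_{n+1} − ∂α_N(z,x)/∂q_{n+1}). -/

import Mathlib

open scoped BigOperators
open Finset Matrix

noncomputable section

/-- Phase space ℝ^{2m}: a point is a pair (q, p). -/
abbrev Phase (m : ℕ) := (Fin m → ℝ) × (Fin m → ℝ)

/-- Partial derivative with respect to `q i`. -/
noncomputable def pdq {m : ℕ} (f : Phase m → ℝ) (i : Fin m) (x : Phase m) : ℝ :=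
  deriv (fun t => f (Function.update x.1 i t, x.2)) (x.1 i)

/-- Partial derivative with respect to `p i`. -/
noncomputable def pdp {m : ℕ} (f : Phase m → ℝ) (i : Fin m) (x : Phase m) : ℝ :=
  deriv (fun t => f (x.1, Function.update x.2 i t)) (x.2 i)

/-- Canonical Poisson bracket {f,g} = Σ_i (∂f/∂p_i ∂g/∂q_i − ∂f/∂q_i ∂g/∂p_i). -/
noncomputable def poisson {m : ℕ} (f g : Phase m → ℝ) (x : Phase m) : ℝ :=
  ∑ i, (pdp f i x * pdq g i x - pdq f i x * pdp g i x)

/-- Partial derivative of a function of q only. -/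
noncomputable def pdq' {m : ℕ} (f : (Fin m → ℝ) → ℝ) (i : Fin m) (q : Fin m → ℝ) : ℝ :=
  deriv (fun t => f (Function.update q i t)) (q i)

/-- U(z) = 4z − 4q_{n+1} + 4B − Σ q_i²/(z+A_i). -/
noncomputable def Ufun (n : ℕ) (A : Fin n → ℝ) (B : ℝ) (z : ℝ) (x : Phase (n+1)) : ℝ :=
  4 * z - 4 * x.1 (Fin.last n) + 4 * B - ∑ i : Fin n, (x.1 i.castSucc) ^ 2 / (z + A i)

/-- V(z) = 2p_{n+1} + Σ p_i q_i/(z+A_i). -/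
noncomputable def Vfun (n : ℕ) (A : Fin n → ℝ) (z : ℝ) (x : Phase (n+1)) : ℝ :=
  2 * x.2 (Fin.last n) + ∑ i : Fin n, x.2 i.castSucc * x.1 i.castSucc / (z + A i)

/-- Q_N(z) = z^{N−2} − (1/2) Σ_{k=0}^{N−3} (∂𝒰_{N−k−1}/∂q_{n+1}) z^k. -/
noncomputable def Qfun (n N : ℕ) (𝒰 : ℕ → (Fin (n+1) → ℝ) → ℝ) (z : ℝ)
    (x : Phase (n+1)) : ℝ :=
  z ^ (N-2) - (1/2) * ∑ k ∈ Finset.range (N-2), pdq' (𝒰 (N-k-1)) (Fin.last n) x.1 * z ^ k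

/-- W_N(z) = 4z^{N−1} − 2 Σ_{k=0}^{N−2} 𝒰_{N−k−1} z^k + Σ p_i²/(z+A_i). -/
noncomputable def Wfun (n N : ℕ) (A : Fin n → ℝ) (𝒰 : ℕ → (Fin (n+1) → ℝ) → ℝ) (z : ℝ)
    (x : Phase (n+1)) : ℝ :=
  4 * z ^ (N-1) - 2 * ∑ k ∈ Finset.range (N-1), 𝒰 (N-k-1) x.1 * z ^ k
    + ∑ i : Fin n, (x.2 i.castSucc) ^ 2 / (z + A i)

/-- α_N(x,y) = (Q_N(x) − Q_N(y))/(x − y). -/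
noncomputable def alphaFun (n N : ℕ) (𝒰 : ℕ → (Fin (n+1) → ℝ) → ℝ) (z w : ℝ)
    (x : Phase (n+1)) : ℝ :=
  (Qfun n N 𝒰 z x - Qfun n N 𝒰 w x) / (z - w)

/-- The hierarchy recurrence hypotheses on the potentials 𝒰₀,…,𝒰_M. -/
def Recur (n M : ℕ) (A : Fin n → ℝ) (B : ℝ) (𝒰 : ℕ → (Fin (n+1) → ℝ) → ℝ) : Prop :=
  (∀ m ≤ M, ContDiff ℝ (⊤ : ℕ∞) (𝒰 m)) ∧
  (∀ q, 𝒰 0 q = 0) ∧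
  (∀ q : Fin (n+1) → ℝ, 𝒰 1 q = -2 * q (Fin.last n) - 2 * B) ∧
  (∀ q : Fin (n+1) → ℝ,
      𝒰 2 q = -2 * (q (Fin.last n)) ^ 2 - (1/2) * ∑ i : Fin n, (q i.castSucc) ^ 2) ∧
  (∀ m, 2 ≤ m → m ≤ M → ∀ q : Fin (n+1) → ℝ,
    (∀ i : Fin n, pdq' (𝒰 m) i.castSucc q
        = (1/2) * q i.castSucc * pdq' (𝒰 (m-1)) (Fin.last n) q
          - A i * pdq' (𝒰 (m-1)) i.castSucc q) ∧
    pdq' (𝒰 m) (Fin.last n) q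
        = 𝒰 (m-1) q + (1/2) * ∑ i : Fin n, q i.castSucc * pdq' (𝒰 (m-1)) i.castSucc q
          + (q (Fin.last n) - B) * pdq' (𝒰 (m-1)) (Fin.last n) q)

/-- The Hamiltonian H_N = (1/2) Σ p_i² + 𝒰_N. -/
noncomputable def Hfun (n N : ℕ) (𝒰 : ℕ → (Fin (n+1) → ℝ) → ℝ) (x : Phase (n+1)) : ℝ :=
  (1/2) * ∑ i : Fin (n+1), (x.2 i) ^ 2 + 𝒰 N x.1

/-! ### Auxiliary calculus lemmas -/

lemma hasDerivAt_comp_update {m : ℕ} (f : (Fin m → ℝ) → ℝ) (q : Fin m → ℝ) (i : Fin m)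
    (hf : DifferentiableAt ℝ f q) :
    HasDerivAt (fun t => f (Function.update q i t)) (fderiv ℝ f q (Pi.single i 1)) (q i) := by
  have h1 := hasDerivAt_update q i (q i)
  have h2 : HasFDerivAt f (fderiv ℝ f q) (Function.update q i (q i)) := by
    rw [Function.update_eq_self]; exact hf.hasFDerivAt
  exact h2.comp_hasDerivAt (q i) h1

lemma pdq'_eq_fderiv {m : ℕ} (f : (Fin m → ℝ) → ℝ) (q : Fin m → ℝ) (i : Fin m)
    (hf : DifferentiableAt ℝ f q) :
    pdq' f i q = fderiv ℝ f q (Pi.single i 1) :=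
  (hasDerivAt_comp_update f q i hf).deriv

lemma mixed_symm {m : ℕ} (f : (Fin m → ℝ) → ℝ) (hf : ContDiff ℝ (⊤ : ℕ∞) f) (q v w : Fin m → ℝ) :
    fderiv ℝ (fun q => fderiv ℝ f q v) q w = fderiv ℝ (fun q => fderiv ℝ f q w) q v := by
  have hd : DifferentiableAt ℝ (fderiv ℝ f) q :=
    ((hf.fderiv_right (m := 1) (WithTop.coe_le_coe.mpr le_top)).differentiable one_ne_zero).differentiableAt
  have e1 : ∀ u : Fin m → ℝ, fderiv ℝ (fun q => fderiv ℝ f q u) q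
      = (fderiv ℝ (fderiv ℝ f) q).flip u := by
    intro u
    rw [fderiv_clm_apply hd (differentiableAt_const u)]
    simp
  rw [e1 v, e1 w]
  simp only [ContinuousLinearMap.flip_apply]
  exact second_derivative_symmetric (fun y => ((hf.differentiable (by simp)) y).hasFDerivAt)
    hd.hasFDerivAt w v

/-- c_m = ∂𝒰_m/∂q_{n+1}, as an fderiv. -/
noncomputable def cf (n : ℕ) (𝒰 : ℕ → (Fin (n+1) → ℝ) → ℝ) (m : ℕ) (q : Fin (n+1) → ℝ) : ℝ :=
  fderiv ℝ (𝒰 m) q (Pi.single (Fin.last n) 1)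

/-- Directional derivative of c_m. -/
noncomputable def Dc (n : ℕ) (𝒰 : ℕ → (Fin (n+1) → ℝ) → ℝ) (m : ℕ) (i : Fin (n+1))
    (q : Fin (n+1) → ℝ) : ℝ :=
  fderiv ℝ (cf n 𝒰 m) q (Pi.single i 1)

lemma cf_smooth (n : ℕ) (𝒰 : ℕ → (Fin (n+1) → ℝ) → ℝ) (m : ℕ) (h : ContDiff ℝ (⊤ : ℕ∞) (𝒰 m)) :
    ContDiff ℝ (⊤ : ℕ∞) (cf n 𝒰 m) :=
  (h.fderiv_right (by simp)).clm_apply contDiff_const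

lemma Dc_rec (n : ℕ) (A : Fin n → ℝ) (B : ℝ) (M : ℕ) (𝒰 : ℕ → (Fin (n+1) → ℝ) → ℝ)
    (h : Recur n M A B 𝒰) (m : ℕ) (hm2 : 2 ≤ m) (hmM : m ≤ M) (i : Fin n)
    (q : Fin (n+1) → ℝ) :
    Dc n 𝒰 m i.castSucc q
      = 1/2 * q i.castSucc * Dc n 𝒰 (m-1) (Fin.last n) q
        - A i * Dc n 𝒰 (m-1) i.castSucc q := by
  have hsm : ContDiff ℝ (⊤ : ℕ∞) (𝒰 m) := h.1 m hmM
  have hsm1 : ContDiff ℝ (⊤ : ℕ∞) (𝒰 (m-1)) := h.1 (m-1) (by omega)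
  set g : (Fin (n+1) → ℝ) → ℝ := fun q' => fderiv ℝ (𝒰 (m-1)) q' (Pi.single i.castSucc 1)
    with hgdef
  have hg : ContDiff ℝ (⊤ : ℕ∞) g := (hsm1.fderiv_right (by simp)).clm_apply contDiff_const
  have hcf1 : ContDiff ℝ (⊤ : ℕ∞) (cf n 𝒰 (m-1)) := cf_smooth n 𝒰 _ hsm1
  have hproj : ContDiff ℝ (⊤ : ℕ∞) (fun q' : Fin (n+1) → ℝ => q' i.castSucc) :=
    (ContinuousLinearMap.proj (R := ℝ) (φ := fun _ : Fin (n+1) => ℝ) i.castSucc).contDiff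
  set R : (Fin (n+1) → ℝ) → ℝ :=
    fun q' => 1/2 * q' i.castSucc * cf n 𝒰 (m-1) q' - A i * g q' with hRdef
  have hRsmooth : ContDiff ℝ (⊤ : ℕ∞) R := by
    apply ContDiff.sub
    · exact ((contDiff_const.mul hproj).mul hcf1)
    · exact contDiff_const.mul hg
  have hfun : (fun q' => fderiv ℝ (𝒰 m) q' (Pi.single i.castSucc 1)) = R := by
    funext q'
    have hr := (h.2.2.2.2 m hm2 hmM q').1 i
    rw [pdq'_eq_fderiv _ _ _ (hsm.differentiable (by simp)).differentiableAt,
        pdq'_eq_fderiv _ _ _ (hsm1.differentiable (by simp)).differentiableAt,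
        pdq'_eq_fderiv _ _ _ (hsm1.differentiable (by simp)).differentiableAt] at hr
    exact hr
  have key1 : Dc n 𝒰 m i.castSucc q
      = fderiv ℝ (fun q' => fderiv ℝ (𝒰 m) q' (Pi.single i.castSucc 1)) q
          (Pi.single (Fin.last n) 1) := by
    have ecf : (fun q' => fderiv ℝ (𝒰 m) q' (Pi.single (Fin.last n) 1)) = cf n 𝒰 m := rfl
    rw [Dc, ← ecf]
    exact mixed_symm (𝒰 m) hsm q _ _
  -- derivative of R along the path through the last coordinate
  have hne : i.castSucc ≠ Fin.last n := (Fin.castSucc_lt_last i).ne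
  have heq : (fun t => R (Function.update q (Fin.last n) t))
      = fun t => 1/2 * q i.castSucc * cf n 𝒰 (m-1) (Function.update q (Fin.last n) t)
          - A i * g (Function.update q (Fin.last n) t) := by
    funext t
    rw [hRdef]
    simp only
    rw [Function.update_of_ne hne]
  have h1 : HasDerivAt
      (fun t => 1/2 * q i.castSucc * cf n 𝒰 (m-1) (Function.update q (Fin.last n) t))
      (1/2 * q i.castSucc * Dc n 𝒰 (m-1) (Fin.last n) q) (q (Fin.last n)) :=
    (hasDerivAt_comp_update (cf n 𝒰 (m-1)) q (Fin.last n)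
      (hcf1.differentiable (by simp)).differentiableAt).const_mul _
  have h2 : HasDerivAt (fun t => A i * g (Function.update q (Fin.last n) t))
      (A i * Dc n 𝒰 (m-1) i.castSucc q) (q (Fin.last n)) := by
    have hh := (hasDerivAt_comp_update g q (Fin.last n)
      (hg.differentiable (by simp)).differentiableAt).const_mul (A i)
    have hmix : fderiv ℝ g q (Pi.single (Fin.last n) 1) = Dc n 𝒰 (m-1) i.castSucc q := by
      rw [hgdef, Dc]
      exact mixed_symm (𝒰 (m-1)) hsm1 q _ _
    rwa [hmix] at hh
  have hpath : HasDerivAt (fun t => R (Function.update q (Fin.last n) t))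
      (1/2 * q i.castSucc * Dc n 𝒰 (m-1) (Fin.last n) q
        - A i * Dc n 𝒰 (m-1) i.castSucc q) (q (Fin.last n)) := by
    rw [heq]; exact h1.sub h2
  have hB := hasDerivAt_comp_update R q (Fin.last n)
    (hRsmooth.differentiable (by simp)).differentiableAt
  have hval : fderiv ℝ R q (Pi.single (Fin.last n) 1)
      = 1/2 * q i.castSucc * Dc n 𝒰 (m-1) (Fin.last n) q
        - A i * Dc n 𝒰 (m-1) i.castSucc q := hB.unique hpath
  rw [key1, hfun, hval]

lemma telescope (a c : ℝ) (d e : ℕ → ℝ) :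
    ∀ M : ℕ, (∀ k, 1 ≤ k → k ≤ M → c * e k = d (k-1) + a * d k) → ∀ w : ℝ,
      (w + a) * ∑ k ∈ Finset.range (M+1), d k * w^k
        - c * ∑ k ∈ Finset.range (M+1), e k * w^k
      = a * d 0 - c * e 0 + d M * w^(M+1) := by
  intro M
  induction M with
  | zero => intro _ w; simp [Finset.sum_range_one]; ring
  | succ M ih =>
    intro hr w
    rw [Finset.sum_range_succ _ (M+1), Finset.sum_range_succ _ (M+1)]
    have hk := hr (M+1) (by omega) le_rfl
    simp only [Nat.add_sub_cancel] at hk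
    have ihh := ih (fun k h1 h2 => hr k h1 (by omega)) w
    linear_combination ihh - w^(M+1) * hk

lemma cf_one (n : ℕ) (B : ℝ) (𝒰 : ℕ → (Fin (n+1) → ℝ) → ℝ)
    (h1 : ∀ q : Fin (n+1) → ℝ, 𝒰 1 q = -2 * q (Fin.last n) - 2 * B) :
    cf n 𝒰 1 = fun _ => (-2 : ℝ) := by
  funext q
  have hfun : 𝒰 1 = fun q : Fin (n+1) → ℝ => -2 * q (Fin.last n) - 2*B := funext h1
  have hp : DifferentiableAt ℝ (fun q' : Fin (n+1) → ℝ => q' (Fin.last n)) q :=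
    (ContinuousLinearMap.proj (R := ℝ) (φ := fun _ : Fin (n+1) => ℝ)
      (Fin.last n)).differentiable.differentiableAt
  have hdiff : DifferentiableAt ℝ (𝒰 1) q := by
    rw [hfun]
    exact ((differentiableAt_const (-2:ℝ)).mul hp).sub (differentiableAt_const _)
  have hderiv : HasDerivAt (fun t => 𝒰 1 (Function.update q (Fin.last n) t)) (-2)
      (q (Fin.last n)) := by
    have heq : (fun t => 𝒰 1 (Function.update q (Fin.last n) t)) = fun t => -2*t - 2*B := by
      funext t; rw [h1, Function.update_self]
    rw [heq]
    simpa using ((hasDerivAt_id (q (Fin.last n))).const_mul (-2:ℝ)).sub_const (2*B)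
  exact (hasDerivAt_comp_update (𝒰 1) q (Fin.last n) hdiff).unique hderiv

lemma Dc_one_zero (n : ℕ) (B : ℝ) (𝒰 : ℕ → (Fin (n+1) → ℝ) → ℝ)
    (h1 : ∀ q : Fin (n+1) → ℝ, 𝒰 1 q = -2 * q (Fin.last n) - 2 * B)
    (v : Fin (n+1)) (q : Fin (n+1) → ℝ) : Dc n 𝒰 1 v q = 0 := by
  rw [Dc, cf_one n B 𝒰 h1]
  simp

lemma Dc_two_zero (n : ℕ) (A : Fin n → ℝ) (B : ℝ) (M : ℕ) (𝒰 : ℕ → (Fin (n+1) → ℝ) → ℝ)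
    (h : Recur n M A B 𝒰) (hM : 2 ≤ M) (i : Fin n) (q : Fin (n+1) → ℝ) :
    Dc n 𝒰 2 i.castSucc q = 0 := by
  rw [Dc_rec n A B M 𝒰 h 2 le_rfl hM i q]
  rw [show (2:ℕ) - 1 = 1 from rfl, Dc_one_zero n B 𝒰 h.2.2.1, Dc_one_zero n B 𝒰 h.2.2.1]
  ring

lemma hasDerivAt_Qpath (n N : ℕ) (𝒰 : ℕ → (Fin (n+1) → ℝ) → ℝ)
    (hsm : ∀ m ≤ N-1, ContDiff ℝ (⊤ : ℕ∞) (𝒰 m)) (hN : 3 ≤ N)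
    (w : ℝ) (i : Fin (n+1)) (pt : Phase (n+1)) :
    HasDerivAt (fun t => Qfun n N 𝒰 w (Function.update pt.1 i t, pt.2))
      (-(1/2 * ∑ k ∈ Finset.range (N-2), Dc n 𝒰 (N-k-1) i pt.1 * w^k)) (pt.1 i) := by
  have heq : (fun t => Qfun n N 𝒰 w (Function.update pt.1 i t, pt.2))
      = fun t => w^(N-2) - 1/2 * ∑ k ∈ Finset.range (N-2),
          cf n 𝒰 (N-k-1) (Function.update pt.1 i t) * w^k := by
    funext t
    simp only [Qfun]
    congr 1
    congr 1
    apply Finset.sum_congr rfl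
    intro k hk
    have hd : DifferentiableAt ℝ (𝒰 (N-k-1)) (Function.update pt.1 i t) :=
      ((hsm (N-k-1) (by omega)).differentiable (by simp)).differentiableAt
    rw [pdq'_eq_fderiv _ _ _ hd]
    rfl
  rw [heq]
  have hsum : HasDerivAt
      (fun t => ∑ k ∈ Finset.range (N-2), cf n 𝒰 (N-k-1) (Function.update pt.1 i t) * w^k)
      (∑ k ∈ Finset.range (N-2), Dc n 𝒰 (N-k-1) i pt.1 * w^k) (pt.1 i) := by
    apply HasDerivAt.fun_sum
    intro k hk
    exact (hasDerivAt_comp_update (cf n 𝒰 (N-k-1)) pt.1 i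
      ((cf_smooth n 𝒰 _ (hsm _ (by omega))).differentiable (by simp)).differentiableAt).mul_const _
  exact (hsum.const_mul (1/2)).const_sub (w^(N-2))

lemma pdq_alpha (n N : ℕ) (𝒰 : ℕ → (Fin (n+1) → ℝ) → ℝ)
    (hsm : ∀ m ≤ N-1, ContDiff ℝ (⊤ : ℕ∞) (𝒰 m)) (hN : 3 ≤ N)
    (z w : ℝ) (hzw : z ≠ w) (i : Fin (n+1)) (pt : Phase (n+1)) :
    pdq (alphaFun n N 𝒰 z w) i pt
      = ((∑ k ∈ Finset.range (N-2), Dc n 𝒰 (N-k-1) i pt.1 * w^k)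
         - (∑ k ∈ Finset.range (N-2), Dc n 𝒰 (N-k-1) i pt.1 * z^k)) / (2*(z-w)) := by
  have hz := hasDerivAt_Qpath n N 𝒰 hsm hN z i pt
  have hw := hasDerivAt_Qpath n N 𝒰 hsm hN w i pt
  have h := (hz.sub hw).div_const (z - w)
  have h2 : pdq (alphaFun n N 𝒰 z w) i pt
      = (-(1/2 * ∑ k ∈ Finset.range (N-2), Dc n 𝒰 (N-k-1) i pt.1 * z^k)
         - -(1/2 * ∑ k ∈ Finset.range (N-2), Dc n 𝒰 (N-k-1) i pt.1 * w^k)) / (z-w) := h.deriv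
  rw [h2]
  have hzw' : z - w ≠ 0 := sub_ne_zero.mpr hzw
  field_simp
  ring

lemma pdp_alpha (n N : ℕ) (𝒰 : ℕ → (Fin (n+1) → ℝ) → ℝ) (z w : ℝ) (i : Fin (n+1))
    (pt : Phase (n+1)) : pdp (alphaFun n N 𝒰 z w) i pt = 0 := by
  show deriv (fun t => alphaFun n N 𝒰 z w (pt.1, Function.update pt.2 i t)) (pt.2 i) = 0
  have heq : (fun t => alphaFun n N 𝒰 z w (pt.1, Function.update pt.2 i t))
      = fun _ => alphaFun n N 𝒰 z w pt := rfl
  rw [heq]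
  exact deriv_const _ _

lemma pdp_W_castSucc (n N : ℕ) (A : Fin n → ℝ) (𝒰 : ℕ → (Fin (n+1) → ℝ) → ℝ) (w : ℝ)
    (j : Fin n) (pt : Phase (n+1)) :
    pdp (Wfun n N A 𝒰 w) j.castSucc pt = 2 * pt.2 j.castSucc / (w + A j) := by
  show deriv (fun t => Wfun n N A 𝒰 w (pt.1, Function.update pt.2 j.castSucc t))
    (pt.2 j.castSucc) = _
  have heq : (fun t => Wfun n N A 𝒰 w (pt.1, Function.update pt.2 j.castSucc t))
      = fun t => (4*w^(N-1) - 2*∑ k ∈ Finset.range (N-1), 𝒰 (N-k-1) pt.1 * w^k)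
          + ∑ i : Fin n, (if i = j then t else pt.2 i.castSucc)^2 / (w + A i) := by
    funext t
    simp only [Wfun]
    congr 1
    apply Finset.sum_congr rfl
    intro i _
    congr 2
    rw [Function.update_apply]
    simp [Fin.castSucc_inj]
  rw [heq]
  have hsum : HasDerivAt
      (fun t => ∑ i : Fin n, (if i = j then t else pt.2 i.castSucc)^2/(w + A i))
      (2 * pt.2 j.castSucc / (w + A j)) (pt.2 j.castSucc) := by
    have h := HasDerivAt.fun_sum (u := Finset.univ)
        (A := fun i t => (if i = j then t else pt.2 i.castSucc)^2/(w+A i))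
        (A' := fun i => if i = j then 2 * pt.2 j.castSucc / (w + A j) else 0)
        (x := pt.2 j.castSucc) ?_
    · have hv : (∑ i : Fin n, if i = j then 2 * pt.2 j.castSucc / (w + A j) else 0)
          = 2 * pt.2 j.castSucc / (w + A j) := by
        rw [Finset.sum_ite_eq' Finset.univ j (fun _ => 2 * pt.2 j.castSucc / (w + A j))]
        simp
      rwa [hv] at h
    · intro i _
      by_cases hij : i = j
      · subst hij
        simp only [if_pos rfl]
        have := (hasDerivAt_pow 2 (pt.2 i.castSucc)).div_const (w + A i)
        simpa using this
      · simp only [if_neg hij]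
        exact hasDerivAt_const _ _
  exact (hsum.const_add _).deriv

lemma pdp_W_last (n N : ℕ) (A : Fin n → ℝ) (𝒰 : ℕ → (Fin (n+1) → ℝ) → ℝ) (w : ℝ)
    (pt : Phase (n+1)) :
    pdp (Wfun n N A 𝒰 w) (Fin.last n) pt = 0 := by
  show deriv (fun t => Wfun n N A 𝒰 w (pt.1, Function.update pt.2 (Fin.last n) t))
    (pt.2 (Fin.last n)) = 0
  have heq : (fun t => Wfun n N A 𝒰 w (pt.1, Function.update pt.2 (Fin.last n) t))
      = fun _ => Wfun n N A 𝒰 w pt := by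
    funext t
    simp only [Wfun]
    congr 1
    apply Finset.sum_congr rfl
    intro i _
    rw [Function.update_of_ne (Fin.castSucc_lt_last i).ne]
  rw [heq]
  exact deriv_const _ _

set_option maxRecDepth 100000 in
set_option maxHeartbeats 2000000 in
/-- {W_N(y), α_N(z,x)} − {W_N(x), α_N(z,y)}
= ((V(x) − V(y))/(x−y))·(∂α_N(z,y)/∂q_{n+1} − ∂α_N(z,x)/∂q_{n+1}). -/
theorem W_alpha_bracket
    (n : ℕ) (hn : 1 ≤ n) (A : Fin n → ℝ) (hA : Function.Injective A) (B : ℝ)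
    (N : ℕ) (hN : 3 ≤ N) (𝒰 : ℕ → (Fin (n+1) → ℝ) → ℝ)
    (hrec : Recur n (N-1) A B 𝒰) :
    ∀ x y z : ℝ, x ≠ y → y ≠ z → x ≠ z →
    (∀ i : Fin n, x ≠ -A i) → (∀ i : Fin n, y ≠ -A i) → (∀ i : Fin n, z ≠ -A i) →
    ∀ pt : Phase (n+1),
      poisson (Wfun n N A 𝒰 y) (alphaFun n N 𝒰 z x) pt
        - poisson (Wfun n N A 𝒰 x) (alphaFun n N 𝒰 z y) pt
      = ((Vfun n A x pt - Vfun n A y pt) / (x - y))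
          * (pdq (alphaFun n N 𝒰 z y) (Fin.last n) pt
             - pdq (alphaFun n N 𝒰 z x) (Fin.last n) pt) := by
  intro x y z hxy hyz hxz hxA hyA hzA pt
  have hsm := hrec.1
  -- the key telescoping relation
  have key : ∀ (j : Fin n) (w : ℝ),
      (w + A j) * (∑ k ∈ Finset.range (N-2), Dc n 𝒰 (N-k-1) j.castSucc pt.1 * w^k)
        - (pt.1 j.castSucc / 2)
            * (∑ k ∈ Finset.range (N-2), Dc n 𝒰 (N-k-1) (Fin.last n) pt.1 * w^k)
      = A j * Dc n 𝒰 (N-1) j.castSucc pt.1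
        - (pt.1 j.castSucc / 2) * Dc n 𝒰 (N-1) (Fin.last n) pt.1 := by
    intro j w
    have htel := telescope (A j) (pt.1 j.castSucc / 2)
        (fun k => Dc n 𝒰 (N-k-1) j.castSucc pt.1)
        (fun k => Dc n 𝒰 (N-k-1) (Fin.last n) pt.1)
        (N-3) ?_ w
    · have hr32 : N - 3 + 1 = N - 2 := by omega
      rw [hr32] at htel
      have hd0 : Dc n 𝒰 (N-(N-3)-1) j.castSucc pt.1 = 0 := by
        have he : N-(N-3)-1 = 2 := by omega
        rw [he]
        exact Dc_two_zero n A B (N-1) 𝒰 hrec (by omega) j pt.1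
      simp only [Nat.sub_zero] at htel ⊢
      linear_combination htel + w^(N-2) * hd0
    · intro k h1k hkM
      have hm2 : 2 ≤ N - k := by omega
      have hmM : N - k ≤ N - 1 := by omega
      have hdr := Dc_rec n A B (N-1) 𝒰 hrec (N-k) hm2 hmM j pt.1
      have hidx : N - (k-1) - 1 = N - k := by omega
      rw [hidx]
      linear_combination -hdr
  -- value of the Poisson brackets
  have hpois : ∀ w₁ w₂ : ℝ, poisson (Wfun n N A 𝒰 w₁) (alphaFun n N 𝒰 z w₂) pt
      = ∑ j : Fin n, 2 * pt.2 j.castSucc / (w₁ + A j)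
          * pdq (alphaFun n N 𝒰 z w₂) j.castSucc pt := by
    intro w₁ w₂
    simp only [poisson, pdp_alpha, mul_zero, sub_zero]
    rw [Fin.sum_univ_castSucc, pdp_W_last n N A 𝒰 w₁ pt, zero_mul, add_zero]
    exact Finset.sum_congr rfl (fun j _ => by rw [pdp_W_castSucc])
  -- V difference as a sum
  have hVd : Vfun n A x pt - Vfun n A y pt
      = ∑ j : Fin n, (pt.2 j.castSucc * pt.1 j.castSucc / (x + A j)
          - pt.2 j.castSucc * pt.1 j.castSucc / (y + A j)) := by
    simp only [Vfun]
    rw [Finset.sum_sub_distrib]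
    ring
  have hzx : z ≠ x := fun h => hxz h.symm
  have hzy : z ≠ y := fun h => hyz h.symm
  rw [hpois y x, hpois x y, hVd, Finset.sum_div, Finset.sum_mul,
      pdq_alpha n N 𝒰 hsm hN z y hzy (Fin.last n) pt,
      pdq_alpha n N 𝒰 hsm hN z x hzx (Fin.last n) pt,
      ← Finset.sum_sub_distrib]
  refine Finset.sum_congr rfl (fun j _ => ?_)
  rw [pdq_alpha n N 𝒰 hsm hN z x hzx j.castSucc pt,
      pdq_alpha n N 𝒰 hsm hN z y hzy j.castSucc pt]
  -- abbreviations
  set Sx := ∑ k ∈ Finset.range (N-2), Dc n 𝒰 (N-k-1) j.castSucc pt.1 * x^k with hSx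
  set Sy := ∑ k ∈ Finset.range (N-2), Dc n 𝒰 (N-k-1) j.castSucc pt.1 * y^k with hSy
  set Sz := ∑ k ∈ Finset.range (N-2), Dc n 𝒰 (N-k-1) j.castSucc pt.1 * z^k with hSz
  set Tx := ∑ k ∈ Finset.range (N-2), Dc n 𝒰 (N-k-1) (Fin.last n) pt.1 * x^k with hTx
  set Ty := ∑ k ∈ Finset.range (N-2), Dc n 𝒰 (N-k-1) (Fin.last n) pt.1 * y^k with hTy
  set Tz := ∑ k ∈ Finset.range (N-2), Dc n 𝒰 (N-k-1) (Fin.last n) pt.1 * z^k with hTz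
  have kx := key j x
  have ky := key j y
  have kz := key j z
  have hxa : x + A j ≠ 0 := fun h => hxA j (by linarith)
  have hya : y + A j ≠ 0 := fun h => hyA j (by linarith)
  have hzx' : z - x ≠ 0 := sub_ne_zero.mpr hzx
  have hzy' : z - y ≠ 0 := sub_ne_zero.mpr hzy
  have hxy' : x - y ≠ 0 := sub_ne_zero.mpr hxy
  have hza : z + A j ≠ 0 := fun h => hzA j (by linarith)
  set C := A j * Dc n 𝒰 (N-1) j.castSucc pt.1
    - pt.1 j.castSucc / 2 * Dc n 𝒰 (N-1) (Fin.last n) pt.1 with hC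
  have ex : Sx = (C + pt.1 j.castSucc / 2 * Tx) / (x + A j) := by
    rw [eq_div_iff hxa, hSx, hTx]; linear_combination kx
  have ey : Sy = (C + pt.1 j.castSucc / 2 * Ty) / (y + A j) := by
    rw [eq_div_iff hya, hSy, hTy]; linear_combination ky
  have ez : Sz = (C + pt.1 j.castSucc / 2 * Tz) / (z + A j) := by
    rw [eq_div_iff hza, hSz, hTz]; linear_combination kz
  rw [ex, ey, ez]
  simp only [hTx, hTy, hTz]
  field_simp
  ring
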